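/- Let Ω ⊂ RP^n be an open properly convex set and S the boundary of the convex body P obtained as the intersection of all affine half-spaces H (in the cone C(Ω) ⊂ R^{n+1}) such that the volume of the part of C(Ω) outside H equals 1. Then S meets every open ray of C(Ω) in exactly one point, and S is invariant under the subgroup SL(C(Ω)) of volume-preserving linear maps preserving C(Ω). -/

import Mathlib

/-!
A half-space `{x | c ≤ ⟪x, v⟫}` cutting a slice of volume `1` off `C` has `c > 0` and `v ≥ 0`
on `C`: otherwise the slice would contain an open cone, and open cones have infinite volume.
Hence the Vinberg body `P` is closed and `P + C ⊆ interior P`, so every ray `t ↦ t • y` of `C`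
stays in `interior P` once it has entered `P`, and meets `∂P` exactly at
`t₀ = inf {t | t • y ∈ P}`. This infimum is a positive real: a vector `v` in the interior of the
dual cone (nonempty since `C` is sharp) cuts off bounded slices, and a rescaled one has volume `1`
and `⟪y, v⟫ > 0`; on the other hand no slice of volume `1` contains `C ∩ ball 0 R` for `R` large,
which puts a point of the ray in `P`. A volume-preserving automorphism of `C` permutes these
half-spaces through its adjoint, hence preserves `P` and `∂P`.
-/

open MeasureTheory Pointwise
open scoped RealInnerProductSpace

/-- A cone in `ℝ^{n+1}`: invariant under positive scaling. -/
def IsCone {n : ℕ} (C : Set (EuclideanSpace ℝ (Fin (n+1)))) : Prop :=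
  ∀ t : ℝ, 0 < t → t • C = C

/-- Sharpness: the closure contains no pair of antipodal nonzero vectors. -/
def IsSharp {n : ℕ} (C : Set (EuclideanSpace ℝ (Fin (n+1)))) : Prop :=
  ∀ v : EuclideanSpace ℝ (Fin (n+1)), v ≠ 0 → v ∈ closure C → -v ∉ closure C

/-- Vinberg's convex body `P`: the intersection of all affine half-spaces
`{x : ⟪x,v⟫ ≥ c}` such that the volume of the part of the cone `C` outside the
half-space equals `1`. -/
def VinbergBody {n : ℕ} (C : Set (EuclideanSpace ℝ (Fin (n+1)))) :
    Set (EuclideanSpace ℝ (Fin (n+1))) :=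
  {x | ∀ (v : EuclideanSpace ℝ (Fin (n+1))) (c : ℝ),
    volume (C ∩ {y | ⟪y, v⟫ < c}) = 1 → c ≤ ⟪x, v⟫}

open scoped ENNReal

namespace MeasureTheory.Measure

section AddHaar

variable {E : Type*} [NormedAddCommGroup E] [NormedSpace ℝ E] [MeasurableSpace E]
  [BorelSpace E] [FiniteDimensional ℝ E] [Nontrivial E] {μ : Measure E} [μ.IsAddHaarMeasure]

theorem addHaar_eq_top_of_smul_subset {s : Set E} (hs : μ s ≠ 0) {t : ℝ} (ht : 1 < t)
    (hts : t • s ⊆ s) : μ s = ∞ := by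
  by_contra hfin
  have hpow : 1 < ENNReal.ofReal (t ^ Module.finrank ℝ E) := by
    rw [← ENNReal.ofReal_one, ENNReal.ofReal_lt_ofReal_iff (by positivity)]
    exact one_lt_pow₀ ht Module.finrank_pos.ne'
  have hgrow : μ s < μ (t • s) := by
    rw [addHaar_smul_of_nonneg μ (by linarith) s]
    simpa [mul_comm] using ENNReal.mul_lt_mul_right hs hfin hpow
  exact (measure_mono hts).not_gt hgrow

theorem exists_pos_addHaar_smul_eq_one {s : Set E} (hs : μ s ≠ 0) (hfin : μ s ≠ ∞) :
    ∃ t : ℝ, 0 < t ∧ μ (t • s) = 1 := by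
  set m := (μ s).toReal
  have hm : 0 < m := ENNReal.toReal_pos hs hfin
  refine ⟨m⁻¹ ^ ((Module.finrank ℝ E : ℝ)⁻¹), by positivity, ?_⟩
  rw [addHaar_smul_of_nonneg μ (by positivity) s,
    Real.rpow_inv_natCast_pow (by positivity) Module.finrank_pos.ne',
    ← ENNReal.ofReal_toReal hfin, ← ENNReal.ofReal_mul (by positivity),
    inv_mul_cancel₀ hm.ne', ENNReal.ofReal_one]

end AddHaar

theorem exists_lt_measure_inter_ball {X : Type*} [PseudoMetricSpace X] [MeasurableSpace X]
    (μ : Measure X) {s : Set X} {a : ℝ≥0∞} (h : a < μ s) (x : X) :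
    ∃ R : ℕ, a < μ (s ∩ Metric.ball x R) := by
  have hmono : Monotone fun R : ℕ => s ∩ Metric.ball x R := fun _ _ hRR' =>
    Set.inter_subset_inter_right s (Metric.ball_subset_ball (by exact_mod_cast hRR'))
  rw [← Set.inter_univ s, ← Metric.iUnion_ball_nat x, Set.inter_iUnion,
    hmono.measure_iUnion] at h
  exact lt_iSup_iff.1 h

end MeasureTheory.Measure

section InnerProduct

variable {E : Type*} [NormedAddCommGroup E] [InnerProductSpace ℝ E]

theorem mul_norm_le_inner_of_ball_subset {s : Set E} {x v : E} {r : ℝ} (hr : 0 < r)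
    (hball : Metric.ball x r ⊆ s) (hs : ∀ z ∈ s, 0 ≤ ⟪z, v⟫) : r * ‖v‖ ≤ ⟪x, v⟫ := by
  rcases eq_or_ne v 0 with rfl | hv
  · simp
  have hclosed : Metric.closedBall x r ⊆ {z | 0 ≤ ⟪z, v⟫} := by
    rw [← closure_ball x hr.ne']
    exact closure_minimal (hball.trans hs) (isClosed_le continuous_const (by fun_prop))
  have hz : x - (r * ‖v‖⁻¹) • v ∈ Metric.closedBall x r := by
    rw [Metric.mem_closedBall, dist_eq_norm, sub_sub_cancel_left, norm_neg, norm_smul,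
      Real.norm_eq_abs, abs_of_pos (by positivity),
      inv_mul_cancel_right₀ (norm_ne_zero_iff.2 hv)]
  have hzv := hclosed hz
  rw [Set.mem_ofPred_eq, inner_sub_left, real_inner_smul_left,
    real_inner_self_eq_norm_sq] at hzv
  have hsq : r * ‖v‖⁻¹ * ‖v‖ ^ 2 = r * ‖v‖ := by field_simp
  linarith

theorem ProperCone.nonempty_interior_innerDual [FiniteDimensional ℝ E] (K : ProperCone ℝ E)
    (hK : ∀ x ∈ K, x ≠ 0 → -x ∉ K) :
    (interior (ProperCone.innerDual (K : Set E) : Set E)).Nonempty := by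
  set D : Set E := (ProperCone.innerDual (K : Set E) : Set E)
  have h0 : (0 : E) ∈ D := (ProperCone.innerDual (K : Set E)).zero_mem
  by_contra hD
  have hspan : vectorSpan ℝ D ≠ ⊤ := fun htop => hD <|
    (ProperCone.innerDual (K : Set E)).convex.interior_nonempty_iff_affineSpan_eq_top.2 <|
      (AffineSubspace.affineSpan_eq_top_iff_vectorSpan_eq_top_of_nonempty ℝ E E ⟨0, h0⟩).2 htop
  obtain ⟨w, hw, hw0⟩ :=
    Submodule.exists_mem_ne_zero_of_ne_bot (mt Submodule.orthogonal_eq_bot_iff.1 hspan)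
  have hperp : ∀ u ∈ D, ⟪u, w⟫ = 0 := fun u hu =>
    (vectorSpan ℝ D).inner_right_of_mem_orthogonal
      (by simpa using vsub_mem_vectorSpan ℝ hu h0) hw
  -- `K` is its own double dual, so it contains every vector orthogonal to `D`
  have hmem : ∀ w' : E, (∀ u ∈ D, ⟪u, w'⟫ = 0) → w' ∈ K := fun w' hw' => by
    rw [← ProperCone.innerDual_innerDual K]
    exact fun u hu => (hw' u hu).ge
  exact hK w (hmem w hperp) hw0
    (hmem (-w) fun u hu => by rw [inner_neg_right, hperp u hu, neg_zero])

end InnerProduct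

theorem existsUnique_pos_smul_mem_frontier {E : Type*} [AddCommGroup E] [Module ℝ E]
    [TopologicalSpace E] [ContinuousSMul ℝ E] {P : Set E} (hP : IsClosed P) {y : E} {a : ℝ}
    (ha : 0 < a) (hlow : ∀ t : ℝ, t • y ∈ P → a ≤ t) (hne : ∃ t : ℝ, t • y ∈ P)
    (hup : ∀ s t : ℝ, s • y ∈ P → s < t → t • y ∈ interior P) :
    ∃! t : ℝ, 0 < t ∧ t • y ∈ frontier P := by
  rw [hP.frontier_eq]
  set S := {t : ℝ | t • y ∈ P}
  have hSbdd : BddBelow S := ⟨a, hlow⟩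
  have hinf : sInf S ∈ S := (hP.preimage (by fun_prop)).csInf_mem hne hSbdd
  refine ⟨sInf S, ⟨ha.trans_le (hlow _ hinf), hinf, fun hint => ?_⟩, ?_⟩
  · obtain ⟨t, ht, htP⟩ := Filter.Eventually.exists_lt (p := fun t : ℝ => t • y ∈ interior P)
      ((isOpen_interior.preimage (by fun_prop)).mem_nhds hint)
    exact ht.not_ge (csInf_le hSbdd (interior_subset (s := P) htP))
  · rintro t ⟨-, htP, htint⟩
    rcases (csInf_le hSbdd htP).lt_or_eq with hlt | heq
    · exact absurd (hup _ _ hinf hlt) htint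
    · exact heq.symm

section Vinberg

variable {n : ℕ} {C : Set (EuclideanSpace ℝ (Fin (n+1)))}

local notation "ℝⁿ⁺¹" => EuclideanSpace ℝ (Fin (n+1))

theorem IsCone.smul_mem (hCc : IsCone C) {y : ℝⁿ⁺¹} (hy : y ∈ C) {t : ℝ} (ht : 0 < t) :
    t • y ∈ C := by
  rw [← hCc t ht]
  exact Set.smul_mem_smul_set hy

theorem IsCone.smul_inter_halfspace (hCc : IsCone C) (v : ℝⁿ⁺¹) (c : ℝ) {t : ℝ} (ht : 0 < t) :
    t • (C ∩ {y | ⟪y, v⟫ < c}) = C ∩ {y | ⟪y, v⟫ < t * c} := by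
  rw [Set.smul_set_inter₀ ht.ne', hCc t ht]
  congr 1
  ext y
  rw [Set.mem_smul_set_iff_inv_smul_mem₀ ht.ne']
  simp only [Set.mem_ofPred_eq, real_inner_smul_left]
  exact inv_mul_lt_iff₀ ht

def IsCone.toConvexCone (hCc : IsCone C) (hconv : Convex ℝ C) : ConvexCone ℝ ℝⁿ⁺¹ where
  carrier := C
  smul_mem' _ ht _ hx := hCc.smul_mem hx ht
  add_mem' x hx y hy := by
    have hmid := hconv hx hy (by norm_num : (0 : ℝ) ≤ 1 / 2) (by norm_num : (0 : ℝ) ≤ 1 / 2)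
      (by norm_num)
    convert hCc.smul_mem hmid two_pos using 1
    module

theorem volume_eq_top_of_isCone (hCo : IsOpen C) (hCc : IsCone C) (hne : C.Nonempty) :
    volume C = ∞ :=
  Measure.addHaar_eq_top_of_smul_subset (hCo.measure_ne_zero volume hne) one_lt_two
    (hCc 2 two_pos).le

theorem pos_of_volume_inter_halfspace_eq_one (hCc : IsCone C) {v : ℝⁿ⁺¹} {c : ℝ}
    (h : volume (C ∩ {y | ⟪y, v⟫ < c}) = 1) : 0 < c := by
  by_contra! hc
  refine ENNReal.one_ne_top
    (h ▸ Measure.addHaar_eq_top_of_smul_subset (by simp [h]) one_lt_two ?_)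
  rw [hCc.smul_inter_halfspace v c two_pos]
  exact Set.inter_subset_inter_right C fun y (hy : _ < 2 * c) => by
    simp only [Set.mem_ofPred_eq]; linarith

theorem inner_nonneg_of_volume_inter_halfspace_eq_one (hCo : IsOpen C) (hCc : IsCone C)
    {v : ℝⁿ⁺¹} {c : ℝ} (h : volume (C ∩ {y | ⟪y, v⟫ < c}) = 1) : ∀ x ∈ C, 0 ≤ ⟪x, v⟫ := by
  intro x hx
  by_contra! hxv
  have hU : volume (C ∩ {y | ⟪y, v⟫ < 0}) = ∞ :=
    Measure.addHaar_eq_top_of_smul_subset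
      ((hCo.inter (isOpen_lt (by fun_prop) continuous_const)).measure_ne_zero volume
        ⟨x, hx, hxv⟩)
      one_lt_two (by rw [hCc.smul_inter_halfspace v 0 two_pos, mul_zero])
  have hsub : C ∩ {y | ⟪y, v⟫ < 0} ⊆ C ∩ {y | ⟪y, v⟫ < c} :=
    Set.inter_subset_inter_right C fun y (hy : _ < 0) =>
      hy.trans (pos_of_volume_inter_halfspace_eq_one hCc h)
  simpa [hU, h] using measure_mono (μ := volume) hsub

theorem inner_pos_of_volume_inter_halfspace_eq_one (hCo : IsOpen C) (hCc : IsCone C)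
    {v : ℝⁿ⁺¹} {c : ℝ} (h : volume (C ∩ {y | ⟪y, v⟫ < c}) = 1) {y : ℝⁿ⁺¹} (hy : y ∈ C) :
    0 < ⟪y, v⟫ := by
  have hv : v ≠ 0 := by
    rintro rfl
    have hC : C ∩ {y | ⟪y, (0 : ℝⁿ⁺¹)⟫ < c} = C := by
      simp [pos_of_volume_inter_halfspace_eq_one hCc h]
    rw [hC, volume_eq_top_of_isCone hCo hCc ⟨y, hy⟩] at h
    exact ENNReal.top_ne_one h
  obtain ⟨r, hr, hball⟩ := Metric.isOpen_iff.1 hCo y hy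
  exact (mul_pos hr (norm_pos_iff.2 hv)).trans_le <| mul_norm_le_inner_of_ball_subset hr hball
    (inner_nonneg_of_volume_inter_halfspace_eq_one hCo hCc h)

theorem IsSharp.exists_pos_mul_norm_le_inner (hsharp : IsSharp C) (hCc : IsCone C)
    (hconv : Convex ℝ C) (hne : C.Nonempty) :
    ∃ v : ℝⁿ⁺¹, ∃ δ > 0, ∀ x ∈ C, δ * ‖x‖ ≤ ⟪x, v⟫ := by
  let K : ProperCone ℝ ℝⁿ⁺¹ :=
    ⟨(hCc.toConvexCone hconv).closure.toPointedCone
      (.of_nonempty_of_isClosed hne.closure isClosed_closure), isClosed_closure⟩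
  obtain ⟨v, hv⟩ := K.nonempty_interior_innerDual fun x hx hx0 => hsharp x hx0 hx
  obtain ⟨δ, hδ, hball⟩ := Metric.isOpen_iff.1 isOpen_interior v hv
  refine ⟨v, δ, hδ, fun x hx => ?_⟩
  rw [real_inner_comm]
  exact mul_norm_le_inner_of_ball_subset hδ (hball.trans interior_subset)
    fun u hu => real_inner_comm u x ▸ hu (subset_closure hx)

theorem exists_volume_inter_halfspace_eq_one (hCo : IsOpen C) (hCc : IsCone C)
    (hconv : Convex ℝ C) (hsharp : IsSharp C) (hne : C.Nonempty) :
    ∃ (v : ℝⁿ⁺¹) (c : ℝ), volume (C ∩ {y | ⟪y, v⟫ < c}) = 1 := by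
  obtain ⟨v, δ, hδ, hδv⟩ := hsharp.exists_pos_mul_norm_le_inner hCc hconv hne
  set A := C ∩ {y | ⟪y, v⟫ < 1}
  have hA0 : volume A ≠ 0 := by
    obtain ⟨y, hy⟩ := hne
    have hyv : 0 ≤ ⟪y, v⟫ := (mul_nonneg hδ.le (norm_nonneg y)).trans (hδv y hy)
    refine (hCo.inter (isOpen_lt (by fun_prop) continuous_const)).measure_ne_zero volume
      ⟨(⟪y, v⟫ + 1)⁻¹ • y, hCc.smul_mem hy (by positivity), ?_⟩
    rw [Set.mem_ofPred_eq, real_inner_smul_left, inv_mul_lt_iff₀ (by positivity)]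
    linarith
  have hAfin : volume A ≠ ∞ := by
    refine (Bornology.IsBounded.measure_lt_top ?_).ne
    refine (Metric.isBounded_ball (x := 0) (r := 1 / δ)).subset fun z hz => ?_
    rw [mem_ball_zero_iff]
    exact (lt_div_iff₀' hδ).2 ((hδv z hz.1).trans_lt hz.2)
  obtain ⟨t, ht, hvol⟩ := Measure.exists_pos_addHaar_smul_eq_one hA0 hAfin
  exact ⟨v, t, by rwa [hCc.smul_inter_halfspace v 1 ht, mul_one] at hvol⟩

theorem isClosed_vinbergBody : IsClosed (VinbergBody C) := by
  simp only [VinbergBody, Set.ofPred_forall]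
  exact isClosed_iInter fun v => isClosed_iInter fun c => isClosed_iInter fun _ =>
    isClosed_le continuous_const (by fun_prop)

theorem add_mem_interior_vinbergBody (hCo : IsOpen C) (hCc : IsCone C) {x z : ℝⁿ⁺¹}
    (hx : x ∈ VinbergBody C) (hz : z ∈ C) : x + z ∈ interior (VinbergBody C) := by
  refine interior_maximal ?_ (hCo.vadd x) ⟨z, hz, rfl⟩
  rintro _ ⟨z', hz', rfl⟩ v c h
  change c ≤ ⟪x + z', v⟫
  rw [inner_add_left]
  linarith [hx v c h, inner_nonneg_of_volume_inter_halfspace_eq_one hCo hCc h z' hz']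

theorem exists_smul_mem_vinbergBody (hCo : IsOpen C) (hCc : IsCone C) {y : ℝⁿ⁺¹} (hy : y ∈ C) :
    ∃ T : ℝ, T • y ∈ VinbergBody C := by
  obtain ⟨r, hr, hball⟩ := Metric.isOpen_iff.1 hCo y hy
  obtain ⟨R, hR⟩ := Measure.exists_lt_measure_inter_ball volume
    ((volume_eq_top_of_isCone hCo hCc ⟨y, hy⟩).symm ▸ ENNReal.one_lt_top) 0
  refine ⟨R / r, fun v c h => ?_⟩
  have hcR : c ≤ R * ‖v‖ := by
    by_contra! hlt
    have hsub : C ∩ Metric.ball 0 (R : ℝ) ⊆ C ∩ {z | ⟪z, v⟫ < c} := by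
      rintro z ⟨hzC, hzR⟩
      rw [mem_ball_zero_iff] at hzR
      refine ⟨hzC, ?_⟩
      calc
        ⟪z, v⟫ ≤ ‖z‖ * ‖v‖ := real_inner_le_norm z v
        _ ≤ R * ‖v‖ := by gcongr
        _ < c := hlt
    exact (measure_mono (μ := volume) hsub).not_gt (h ▸ hR)
  calc c ≤ R * ‖v‖ := hcR
    _ = R / r * (r * ‖v‖) := by field_simp
    _ ≤ R / r * ⟪y, v⟫ := by
      gcongr
      exact mul_norm_le_inner_of_ball_subset hr hball
        (inner_nonneg_of_volume_inter_halfspace_eq_one hCo hCc h)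
    _ = ⟪(R / r) • y, v⟫ := (real_inner_smul_left _ _ _).symm

theorem image_vinbergBody_subset {g : ℝⁿ⁺¹ ≃ₗ[ℝ] ℝⁿ⁺¹} (hg : g '' C = C)
    (hmp : MeasurePreserving g volume volume) : g '' VinbergBody C ⊆ VinbergBody C := by
  rintro _ ⟨x, hx, rfl⟩ v c h
  let gₘ := g.toContinuousLinearEquiv.toHomeomorph.toMeasurableEquiv
  have hC : g ⁻¹' C = C := by rw [← hg, Set.preimage_image_eq C g.injective, hg]
  have hpre : gₘ ⁻¹' (C ∩ {y | ⟪y, v⟫ < c}) =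
      C ∩ {y | ⟪y, g.toLinearMap.adjoint v⟫ < c} := by
    ext y
    simp only [Set.mem_preimage, Set.mem_inter_iff, Set.mem_ofPred_eq,
      LinearMap.adjoint_inner_right]
    exact and_congr_left' (Set.ext_iff.1 hC y)
  have hadj := hx _ c <| by
    rw [← hpre, (hmp : MeasurePreserving gₘ volume volume).measure_preimage_equiv, h]
  rwa [LinearMap.adjoint_inner_right] at hadj

theorem image_vinbergBody {g : ℝⁿ⁺¹ ≃ₗ[ℝ] ℝⁿ⁺¹} (hg : g '' C = C)
    (hmp : MeasurePreserving g volume volume) : g '' VinbergBody C = VinbergBody C := by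
  let gₘ := g.toContinuousLinearEquiv.toHomeomorph.toMeasurableEquiv
  have hg' : g.symm '' C = C := by
    nth_rw 1 [← hg]
    exact g.toEquiv.symm_image_image C
  have hmp' : MeasurePreserving g.symm volume volume :=
    (hmp : MeasurePreserving gₘ volume volume).symm gₘ
  refine (image_vinbergBody_subset hg hmp).antisymm fun x hx =>
    ⟨g.symm x, image_vinbergBody_subset hg' hmp' ⟨x, hx, rfl⟩, g.apply_symm_apply x⟩

end Vinberg

theorem vinberg_hypersurface_general (n : ℕ) (C : Set (EuclideanSpace ℝ (Fin (n+1))))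
    (hCo : IsOpen C) (hCc : IsCone C) (hconv : Convex ℝ C) (hsharp : IsSharp C) :
    (∀ y ∈ C, ∃! t : ℝ, 0 < t ∧ t • y ∈ frontier (VinbergBody C)) ∧
    (∀ g : EuclideanSpace ℝ (Fin (n+1)) ≃ₗ[ℝ] EuclideanSpace ℝ (Fin (n+1)),
      (⇑g) '' C = C → MeasurePreserving (⇑g) volume volume →
      (⇑g) '' frontier (VinbergBody C) = frontier (VinbergBody C)) := by
  refine ⟨fun y hy => ?_, fun g hg hmp => ?_⟩
  · obtain ⟨v, c, h⟩ := exists_volume_inter_halfspace_eq_one hCo hCc hconv hsharp ⟨y, hy⟩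
    have hyv := inner_pos_of_volume_inter_halfspace_eq_one hCo hCc h hy
    refine existsUnique_pos_smul_mem_frontier isClosed_vinbergBody
      (div_pos (pos_of_volume_inter_halfspace_eq_one hCc h) hyv) (fun t ht => ?_)
      (exists_smul_mem_vinbergBody hCo hCc hy) fun s t hs hst => ?_
    · have hct := ht v c h
      rw [real_inner_smul_left] at hct
      exact (div_le_iff₀ hyv).2 hct
    · simpa [← add_smul] using
        add_mem_interior_vinbergBody hCo hCc hs (hCc.smul_mem hy (sub_pos.2 hst))
  · exact (g.toContinuousLinearEquiv.toHomeomorph.image_frontier _).trans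
      (congrArg frontier (image_vinbergBody hg hmp))

/-- **The Vinberg hypersurface.** For an open properly convex cone `C ⊂ ℝ^{n+1}`, the
hypersurface `S = ∂P` (boundary of the Vinberg body) meets every open ray of `C` in
exactly one point, and is invariant under every volume-preserving linear automorphism
of the cone (the group `SL(C)`). -/
theorem vinberg_hypersurface (n : ℕ) (C : Set (EuclideanSpace ℝ (Fin (n+1))))
    (hCo : IsOpen C) (hCc : IsCone C) (hconv : Convex ℝ C) (hsharp : IsSharp C)
    (hne : C.Nonempty) :
    (∀ y ∈ C, ∃! t : ℝ, 0 < t ∧ t • y ∈ frontier (VinbergBody C)) ∧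
    (∀ g : EuclideanSpace ℝ (Fin (n+1)) ≃ₗ[ℝ] EuclideanSpace ℝ (Fin (n+1)),
      (⇑g) '' C = C → MeasurePreserving (⇑g) volume volume →
      (⇑g) '' frontier (VinbergBody C) = frontier (VinbergBody C)) :=
  vinberg_hypersurface_general n C hCo hCc hconv hsharp
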